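/- arXiv:1509.05221 — 3 statements merged into one kernel-verified Lean document; each statement's English description precedes it below -/
import Mathlib

section
/- If n is a non-Cayley number (i.e., there exists a vertex-transitive graph of order n that is not a Cayley graph) and m is a positive integer, then nm is also a non-Cayley number. Concretely: if Γ is a vertex-transitive graph on n vertices that is not a Cayley graph, then the disjoint union of m copies of Γ is a vertex-transitive graph on nm vertices that is not a Cayley graph. -/
/-- A graph is vertex-transitive if its automorphism group acts transitively on vertices. -/
def IsVertexTransitive {V : Type} (Γ : SimpleGraph V) : Prop :=
  ∀ u v : V, ∃ e : Γ ≃g Γ, e u = v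

/-- The Cayley graph of a group `R` with connection set `S`: `g ~ h` iff `g * h⁻¹ ∈ S`
(symmetrized; loops removed). -/
def cayleyGraph (R : Type) [Group R] (S : Set R) : SimpleGraph R :=
  SimpleGraph.fromRel (fun g h => g * h⁻¹ ∈ S)

/-- A graph is a Cayley graph if it is isomorphic to `Cay(R,S)` for some group `R`
and inverse-closed `S ⊆ R`. -/
def IsCayleyGraph {V : Type} (Γ : SimpleGraph V) : Prop :=
  ∃ (R : Type) (_ : Group R) (S : Set R),
    (∀ s ∈ S, s⁻¹ ∈ S) ∧ Nonempty (Γ ≃g cayleyGraph R S)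

/-- The disjoint union of `m` copies of `Γ`. -/
def copies {V : Type} (Γ : SimpleGraph V) (m : ℕ) : SimpleGraph (Fin m × V) where
  Adj x y := x.1 = y.1 ∧ Γ.Adj x.2 y.2
  symm := ⟨by intro x y h; exact ⟨h.1.symm, h.2.symm⟩⟩
  loopless := ⟨by intro x h; exact Γ.irrefl h.2⟩

/-!
Suppose the disjoint union of copies of `Γ` were isomorphic to `Cay(R, S)`. Then one copy of `Γ`
sits in `Cay(R, S)` as a union of connected components. The components of `Cay(R, S)` are the right
cosets `N r` of `N = ⟨S⟩`, each isomorphic to `Cay(N, S)` via `x ↦ x r⁻¹`. Hence `Γ` is `k` copies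
of `Cay(N, S)`, where `k` is its number of components, and that is `Cay(ℤ/k × N, {0} × S)`.
-/

section Cayley

variable {R : Type} [Group R] {S : Set R}

theorem cayleyGraph_adj {g h : R} :
    (cayleyGraph R S).Adj g h ↔ g ≠ h ∧ (g * h⁻¹ ∈ S ∨ h * g⁻¹ ∈ S) :=
  SimpleGraph.fromRel_adj _ _ _

theorem cayleyGraph_adj_mul_right {a b : R} (r : R) :
    (cayleyGraph R S).Adj (a * r) (b * r) ↔ (cayleyGraph R S).Adj a b := by
  simp only [cayleyGraph_adj, mul_inv_rev, mul_assoc, mul_inv_cancel_left, ne_eq,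
    mul_left_inj]

def cayleyGraphMulRight (r : R) : cayleyGraph R S ≃g cayleyGraph R S where
  toEquiv := Equiv.mulRight r
  map_rel_iff' := cayleyGraph_adj_mul_right r

@[simp]
theorem cayleyGraphMulRight_apply (r g : R) :
    cayleyGraphMulRight (S := S) r g = g * r :=
  rfl

theorem cayleyGraph_reachable_one {g : R} (hg : g ∈ Subgroup.closure S) :
    (cayleyGraph R S).Reachable g 1 := by
  induction hg using Subgroup.closure_induction with
  | mem s hs =>
    by_cases hs1 : s = 1
    · rw [hs1]
    · exact SimpleGraph.Adj.reachable (cayleyGraph_adj.mpr ⟨hs1, Or.inl (by simpa using hs)⟩)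
  | one => rfl
  | mul x y _ _ hx hy =>
    have hxy : (cayleyGraph R S).Reachable (x * y) y := by
      simpa using hx.map (cayleyGraphMulRight y).toHom
    exact hxy.trans hy
  | inv x _ hx =>
    simpa using (hx.map (cayleyGraphMulRight x⁻¹).toHom).symm

theorem cayleyGraph_reachable_iff {g h : R} :
    (cayleyGraph R S).Reachable g h ↔ g * h⁻¹ ∈ Subgroup.closure S := by
  constructor
  · rintro ⟨w⟩
    induction w with
    | nil => simp
    | @cons a b c hab _ ih =>
      have hab' : a * b⁻¹ ∈ Subgroup.closure S := by
        rcases (cayleyGraph_adj.mp hab).2 with hs | hs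
        · exact Subgroup.subset_closure hs
        · simpa using Subgroup.inv_mem _ (Subgroup.subset_closure hs)
      simpa [mul_assoc] using Subgroup.mul_mem _ hab' ih
  · intro hgh
    simpa using (cayleyGraph_reachable_one hgh).map (cayleyGraphMulRight (S := S) h).toHom

theorem cayleyGraph_subgroup_adj {K : Subgroup R} {x y : K} :
    (cayleyGraph K (Subtype.val ⁻¹' S)).Adj x y ↔ (cayleyGraph R S).Adj x y := by
  simp only [cayleyGraph_adj, ne_eq, Subtype.ext_iff, Set.mem_preimage, Subgroup.coe_mul,
    Subgroup.coe_inv]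

end Cayley

theorem IsCayleyGraph.of_iso {V W : Type} {G : SimpleGraph V} {H : SimpleGraph W}
    (e : G ≃g H) (hH : IsCayleyGraph H) : IsCayleyGraph G := by
  obtain ⟨R, _, S, hS, ⟨f⟩⟩ := hH
  exact ⟨R, _, S, hS, ⟨e.trans f⟩⟩

section Copies

variable {V W : Type} {Γ : SimpleGraph V} {m : ℕ}

def copiesCongr {Δ : SimpleGraph W} (σ : Equiv.Perm (Fin m)) (φ : Γ ≃g Δ) :
    copies Γ m ≃g copies Δ m where
  toEquiv := σ.prodCongr φ.toEquiv
  map_rel_iff' := and_congr σ.apply_eq_iff_eq φ.map_adj_iff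

@[simp]
theorem copiesCongr_apply {Δ : SimpleGraph W} (σ : Equiv.Perm (Fin m)) (φ : Γ ≃g Δ)
    (x : Fin m × V) : copiesCongr σ φ x = (σ x.1, φ x.2) :=
  rfl

theorem IsVertexTransitive.copies (hΓ : IsVertexTransitive Γ) (m : ℕ) :
    IsVertexTransitive (copies Γ m) := by
  rintro ⟨i, u⟩ ⟨j, v⟩
  obtain ⟨φ, hφ⟩ := hΓ u v
  exact ⟨copiesCongr (Equiv.swap i j) φ, by simp [hφ]⟩

def copiesEmbedding (i : Fin m) : Γ ↪g copies Γ m where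
  toFun v := (i, v)
  inj' _ _ h := congrArg Prod.snd h
  map_rel_iff' := and_iff_right rfl

variable {R : Type} [Group R]

def copiesCayleyGraphIso (T : Set R) (k : ℕ) [NeZero k] :
    copies (cayleyGraph R T) k ≃g cayleyGraph (Multiplicative (Fin k) × R) ({1} ×ˢ T) where
  toEquiv := Equiv.prodCongr Multiplicative.ofAdd (Equiv.refl R)
  map_rel_iff' := by
    rintro ⟨i, x⟩ ⟨j, y⟩
    simp only [copies, cayleyGraph_adj, Equiv.prodCongr_apply, Prod.map, Equiv.refl_apply,
      Set.mem_prod, Prod.fst_mul, Prod.snd_mul, Prod.fst_inv, Prod.snd_inv, Set.mem_singleton_iff,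
      mul_inv_eq_one, EmbeddingLike.apply_eq_iff_eq, ne_eq, Prod.mk.injEq]
    by_cases hij : i = j <;> simp [hij, eq_comm (a := j)]

theorem isCayleyGraph_copies_cayleyGraph {T : Set R} (hT : ∀ t ∈ T, t⁻¹ ∈ T) (k : ℕ) [NeZero k] :
    IsCayleyGraph (copies (cayleyGraph R T) k) :=
  ⟨_, _, {1} ×ˢ T, fun t ht => ⟨by simpa using ht.1, hT _ ht.2⟩,
    ⟨copiesCayleyGraphIso T k⟩⟩

end Copies

namespace SimpleGraph.Embedding

variable {V W : Type} {G : SimpleGraph V} {H : SimpleGraph W}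

theorem exists_reachable_of_reachable (f : G ↪g H)
    (hf : ∀ u y, H.Adj (f u) y → y ∈ Set.range f) {u : V} {y : W}
    (h : H.Reachable (f u) y) : ∃ w, G.Reachable u w ∧ f w = y := by
  obtain ⟨p⟩ := h
  generalize hx : f u = x at p
  induction p generalizing u with
  | nil => exact ⟨u, .rfl, hx⟩
  | cons hadj _ ih =>
    subst hx
    obtain ⟨u', rfl⟩ := hf u _ hadj
    obtain ⟨w, hw, rfl⟩ := ih rfl
    exact ⟨w, (f.map_adj_iff.mp hadj).reachable.trans hw, rfl⟩

end SimpleGraph.Embedding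

section CayleyComponents

variable {V : Type} {G : SimpleGraph V} {R : Type} [Group R] {S : Set R}

theorem mul_inv_mem_closure_of_reachable (f : G ↪g cayleyGraph R S) {u v : V}
    (h : G.Reachable u v) : f u * (f v)⁻¹ ∈ Subgroup.closure S :=
  cayleyGraph_reachable_iff.mp (h.map f.toHom)

noncomputable def componentCoordinates (f : G ↪g cayleyGraph R S) (u : V) :
    G.ConnectedComponent × Subgroup.closure S :=
  (G.connectedComponentMk u, ⟨f u * (f (Quot.out (G.connectedComponentMk u)))⁻¹,
    mul_inv_mem_closure_of_reachable f (SimpleGraph.ConnectedComponent.exact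
      (Quot.out_eq (G.connectedComponentMk u)).symm)⟩)

theorem componentCoordinates_bijective (f : G ↪g cayleyGraph R S)
    (hf : ∀ u y, (cayleyGraph R S).Adj (f u) y → y ∈ Set.range f) :
    Function.Bijective (componentCoordinates f) := by
  constructor
  · intro u v huv
    simp only [componentCoordinates, Prod.mk.injEq, Subtype.mk.injEq] at huv
    obtain ⟨hc, hx⟩ := huv
    rw [hc] at hx
    exact f.injective (mul_right_cancel hx)
  · rintro ⟨c, x, hx⟩
    have hreach : (cayleyGraph R S).Reachable (f (Quot.out c)) (x * f (Quot.out c)) :=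
      (cayleyGraph_reachable_iff.mpr (by simpa using hx)).symm
    obtain ⟨w, hw, hfw⟩ := f.exists_reachable_of_reachable hf hreach
    have hc : G.connectedComponentMk w = c :=
      (SimpleGraph.ConnectedComponent.sound hw).symm.trans (Quot.out_eq c)
    refine ⟨w, ?_⟩
    simp [componentCoordinates, hc, hfw]

noncomputable def isoCopiesOfEmbedding [Finite V] (f : G ↪g cayleyGraph R S)
    (hf : ∀ u y, (cayleyGraph R S).Adj (f u) y → y ∈ Set.range f) :
    G ≃g copies (cayleyGraph (Subgroup.closure S) (Subtype.val ⁻¹' S))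
      (Nat.card G.ConnectedComponent) where
  toEquiv := (Equiv.ofBijective _ (componentCoordinates_bijective f hf)).trans
    ((Finite.equivFin _).prodCongr (Equiv.refl _))
  map_rel_iff' := by
    intro u v
    simp only [copies, Equiv.trans_apply, Equiv.prodCongr_apply, Equiv.ofBijective_apply,
      Prod.map, Equiv.refl_apply, Equiv.apply_eq_iff_eq, cayleyGraph_subgroup_adj,
      componentCoordinates]
    constructor
    · rintro ⟨hc, hadj⟩
      rw [hc, cayleyGraph_adj_mul_right] at hadj
      exact f.map_adj_iff.mp hadj
    · intro hadj
      have hc := SimpleGraph.ConnectedComponent.sound hadj.reachable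
      refine ⟨hc, ?_⟩
      rw [hc, cayleyGraph_adj_mul_right]
      exact f.map_adj_iff.mpr hadj

theorem isCayleyGraph_of_embedding [Finite V] [Nonempty V] (f : G ↪g cayleyGraph R S)
    (hf : ∀ u y, (cayleyGraph R S).Adj (f u) y → y ∈ Set.range f)
    (hS : ∀ s ∈ S, s⁻¹ ∈ S) : IsCayleyGraph G :=
  have : NeZero (Nat.card G.ConnectedComponent) := ⟨Nat.card_pos.ne'⟩
  IsCayleyGraph.of_iso (isoCopiesOfEmbedding f hf)
    (isCayleyGraph_copies_cayleyGraph (R := Subgroup.closure S) (fun _ ht => hS _ ht) _)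

end CayleyComponents

/-- If `Γ` is a vertex-transitive non-Cayley graph of order `n` and `m > 0`, then the
disjoint union of `m` copies of `Γ` is a vertex-transitive non-Cayley graph of order `n * m`. -/
theorem noncayley_mul {V : Type} [Fintype V] (Γ : SimpleGraph V) (n m : ℕ)
    (hn : Fintype.card V = n) (hm : 0 < m)
    (hvt : IsVertexTransitive Γ) (hnc : ¬ IsCayleyGraph Γ) :
    Fintype.card (Fin m × V) = n * m ∧
    IsVertexTransitive (copies Γ m) ∧ ¬ IsCayleyGraph (copies Γ m) := by
  refine ⟨by simp [hn, mul_comm], hvt.copies m, ?_⟩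
  rintro ⟨R, _, S, hS, ⟨e⟩⟩
  have : Nonempty V := ⟨(e.symm 1).2⟩
  let i₀ : Fin m := ⟨0, hm⟩
  have hclosed :
      ∀ u y, (cayleyGraph R S).Adj (e (i₀, u)) y → y ∈ Set.range fun w => e (i₀, w) := by
    intro u y hy
    have hcopy : (copies Γ m).Adj (i₀, u) (e.symm y) := by
      simpa using e.symm.map_adj_iff.mpr hy
    have hsymm : (i₀, (e.symm y).2) = e.symm y := Prod.ext hcopy.1 rfl
    exact ⟨(e.symm y).2, by simp [hsymm]⟩
  exact hnc (isCayleyGraph_of_embedding ((copiesEmbedding i₀).trans e.toEmbedding) hclosed hS)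
end

section
/- There exists an infinite set S of primes such that for all elements p₁ < p₂ < ... < p_κ of S: (i) (p₁p₂⋯p_{κ−1})⁴ < p_κ; (ii) gcd(p_i, p_j − 1) = 1 for all i, j; and (iii) the product p₁p₂⋯p_κ is not equal to (q^d − 1)/(q − 1) for any prime power q and any d ≥ 1. -/
open Finset



/-- `Lw n = log n / n`. -/
noncomputable def Lw (n : ℕ) : ℝ := Real.log n / n

lemma Lw_nonneg (n : ℕ) : 0 ≤ Lw n := by
  unfold Lw
  rcases Nat.eq_zero_or_pos n with h | h
  · simp [h]
  · exact div_nonneg (Real.log_natCast_nonneg n) (by positivity)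

lemma Lw_le (m : ℕ) : Lw m ≤ 4 * (m : ℝ) ^ (-((3:ℝ)/4)) := by
  rcases Nat.eq_zero_or_pos m with h | h
  · simp [h, Lw, Real.zero_rpow (by norm_num : (-((3:ℝ)/4)) ≠ 0)]
  have hm : (0:ℝ) < m := by exact_mod_cast h
  have hlog : Real.log m ≤ 4 * (m:ℝ) ^ ((1:ℝ)/4) := by
    have h1 : Real.log ((m:ℝ) ^ ((1:ℝ)/4)) = (1/4) * Real.log m := Real.log_rpow hm _
    have h2 : Real.log ((m:ℝ) ^ ((1:ℝ)/4)) ≤ (m:ℝ) ^ ((1:ℝ)/4) := by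
      have h3 := Real.log_le_sub_one_of_pos (x := (m:ℝ) ^ ((1:ℝ)/4)) (by positivity)
      linarith
    nlinarith [h1, h2]
  have e : (m:ℝ) ^ (-((3:ℝ)/4)) * (m:ℝ) ^ (1:ℝ) = (m:ℝ) ^ ((1:ℝ)/4) := by
    rw [← Real.rpow_add hm]; norm_num
  rw [Real.rpow_one] at e
  have : Lw m = Real.log m / m := rfl
  rw [this, div_le_iff₀ hm]
  calc Real.log m ≤ 4 * (m:ℝ) ^ ((1:ℝ)/4) := hlog
    _ = 4 * (m : ℝ) ^ (-((3:ℝ)/4)) * m := by rw [mul_assoc, e]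


lemma summable_indicator_of_cover {β : Type*} (g : β → ℕ) (h : ℕ → ℝ)
    (h0 : ∀ n, 0 ≤ h n) {A : Set ℕ} (hA : A ⊆ Set.range g)
    (hs : Summable fun b => h (g b)) : Summable (A.indicator h) := by
  rw [← summable_subtype_iff_indicator]
  have hc : ∀ a : A, ∃ b, g b = (a : ℕ) := fun a => hA a.2
  choose f hf using hc
  have hinj : Function.Injective f := by
    intro a b hab
    apply Subtype.ext
    rw [← hf a, ← hf b, hab]
  have he : (h ∘ (Subtype.val : A → ℕ)) = (fun b => h (g b)) ∘ f := by
    funext a; simp [Function.comp, hf a]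
  rw [he]
  exact hs.comp_injective hinj

/-- If `b ≤ a`, `1 ≤ b`, `1 ≤ M`, then `Lw (a / M) ≤ 8M * b^{-3/4}`. -/
lemma Lw_div_le {M a b : ℕ} (hM : 1 ≤ M) (hb : b ≤ a) (hb1 : 1 ≤ b) :
    Lw (a / M) ≤ 8 * M * (b : ℝ) ^ (-((3:ℝ)/4)) := by
  set m := a / M with hm
  have hMR : (1:ℝ) ≤ M := by exact_mod_cast hM
  have hbR : (1:ℝ) ≤ b := by exact_mod_cast hb1
  have hbpos : (0:ℝ) < b := by linarith
  rcases Nat.eq_zero_or_pos m with h0 | h1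
  · rw [h0]
    have : Lw 0 = 0 := by simp [Lw]
    rw [this]
    positivity
  have key : (b : ℝ) ≤ 2 * M * m := by
    have h2 : a < M * m + M := by
      rw [hm]
      have hdm := Nat.div_add_mod a M
      have hmod : a % M < M := Nat.mod_lt _ (by omega)
      omega
    have h3 : (a:ℝ) < M * m + M := by exact_mod_cast h2
    have h4 : (M:ℝ) ≤ M * m := by
      have : (1:ℝ) ≤ (m:ℝ) := by exact_mod_cast h1
      nlinarith
    have h5 : (b:ℝ) ≤ a := by exact_mod_cast hb
    nlinarith
  have hmpos : (0:ℝ) < m := by exact_mod_cast h1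
  have hq : (0:ℝ) < (b:ℝ) / (2*M) := by positivity
  have hle : (b:ℝ)/(2*M) ≤ m := by
    rw [div_le_iff₀ (by positivity)]
    nlinarith
  have mono : (m:ℝ) ^ (-((3:ℝ)/4)) ≤ ((b:ℝ)/(2*M)) ^ (-((3:ℝ)/4)) := by
    rw [Real.rpow_neg (le_of_lt hmpos), Real.rpow_neg (le_of_lt hq)]
    apply inv_anti₀ (by positivity)
    exact Real.rpow_le_rpow (le_of_lt hq) hle (by norm_num)
  have expand : ((b:ℝ)/(2*M)) ^ (-((3:ℝ)/4)) ≤ (2*M) * (b:ℝ) ^ (-((3:ℝ)/4)) := by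
    rw [Real.div_rpow (le_of_lt hbpos) (by positivity), Real.rpow_neg (le_of_lt hbpos),
      Real.rpow_neg (by positivity : (0:ℝ) ≤ 2*M)]
    rw [div_eq_mul_inv, inv_inv]
    rw [mul_comm]
    apply mul_le_mul_of_nonneg_right _ (by positivity)
    calc ((2:ℝ)*M) ^ ((3:ℝ)/4) ≤ (2*M) ^ (1:ℝ) := by
          apply Real.rpow_le_rpow_of_exponent_le (by linarith) (by norm_num)
      _ = 2*M := Real.rpow_one _
  calc Lw m ≤ 4 * (m : ℝ) ^ (-((3:ℝ)/4)) := Lw_le m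
    _ ≤ 4 * ((2*M) * (b:ℝ) ^ (-((3:ℝ)/4))) := by
        apply mul_le_mul_of_nonneg_left (le_trans mono expand) (by norm_num)
    _ = 8 * M * (b : ℝ) ^ (-((3:ℝ)/4)) := by ring


def B2 (M : ℕ) : Set ℕ := {n | ∃ k : ℕ, M * n = 1 + 2^(k+1)}
def B3 (M : ℕ) : Set ℕ := {n | ∃ s j : ℕ, M * n = ∑ i ∈ range (j+3), (s+2)^i}

noncomputable abbrev rr : ℝ := (2:ℝ) ^ (-((3:ℝ)/4))

lemma rr_nonneg : 0 ≤ rr := Real.rpow_nonneg (by norm_num) _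
lemma rr_lt_one : rr < 1 :=
  Real.rpow_lt_one_of_one_lt_of_neg one_lt_two (by norm_num)

lemma pow_cast_rpow (s k : ℕ) (hs : 1 ≤ s) :
    ((s^k : ℕ) : ℝ) ^ (-((3:ℝ)/4)) = ((s:ℝ) ^ (-((3:ℝ)/4)))^k := by
  have hsp : (0:ℝ) < s := by exact_mod_cast hs
  rw [Nat.cast_pow, ← Real.rpow_natCast (s:ℝ) k, ← Real.rpow_mul (le_of_lt hsp),
    mul_comm, Real.rpow_mul (le_of_lt hsp), Real.rpow_natCast]

lemma summable_B2 {M : ℕ} (hM : 1 ≤ M) : Summable ((B2 M).indicator Lw) := by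
  apply summable_indicator_of_cover (fun k => (1 + 2^(k+1))/M) Lw Lw_nonneg
  · rintro n ⟨k, hk⟩
    exact ⟨k, by show (1 + 2^(k+1))/M = n; rw [← hk, Nat.mul_div_cancel_left _ (by omega)]⟩
  · apply Summable.of_nonneg_of_le (fun k => Lw_nonneg _)
      (f := fun k => 8 * M * rr ^ k)
    · intro k
      have h1 : (2:ℕ)^k ≤ 1 + 2^(k+1) := by
        have : (2:ℕ)^k ≤ 2^(k+1) := Nat.pow_le_pow_right (by norm_num) (by omega)
        omega
      have := Lw_div_le hM h1 (Nat.one_le_two_pow)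
      rwa [pow_cast_rpow 2 k (by norm_num)] at this
    · exact (summable_geometric_of_lt_one rr_nonneg rr_lt_one).mul_left _

lemma summable_B3 {M : ℕ} (hM : 1 ≤ M) : Summable ((B3 M).indicator Lw) := by
  apply summable_indicator_of_cover
    (fun p : ℕ × ℕ => (∑ i ∈ range (p.2+3), (p.1+2)^i)/M) Lw Lw_nonneg
  · rintro n ⟨s, j, hn⟩
    refine ⟨(s, j), ?_⟩
    show (∑ i ∈ range (j+3), (s+2)^i)/M = n
    rw [← hn, Nat.mul_div_cancel_left _ (by omega)]
  · apply Summable.of_nonneg_of_le (fun k => Lw_nonneg _)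
      (f := fun p : ℕ × ℕ => (8 * M) * ((((p.1:ℝ)+2) ^ (-((3:ℝ)/2))) * rr ^ p.2))
    · rintro ⟨s, j⟩
      simp only
      have hbase : (s+2)^(j+2) ≤ ∑ i ∈ range (j+3), (s+2)^i := by
        apply Finset.single_le_sum (f := fun i => (s+2)^i) (fun i _ => Nat.zero_le _)
        simp [Finset.mem_range]
      have h1 := Lw_div_le hM hbase (Nat.one_le_pow _ _ (by omega))
      refine le_trans h1 ?_
      rw [pow_cast_rpow (s+2) (j+2) (by omega)]
      -- now : 8*M * (((s+2:ℕ):ℝ)^(-(3/4)))^(j+2) ≤ 8*M * (((s:ℝ)+2)^(-(3/2)) * rr^j)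
      have hx2 : (2:ℝ) ≤ ((s+2:ℕ):ℝ) := by exact_mod_cast Nat.le_add_left 2 s
      have hxpos : (0:ℝ) < ((s+2:ℕ):ℝ) := by linarith
      set x : ℝ := ((s+2:ℕ):ℝ) with hxdef
      have hxe : x ^ (-((3:ℝ)/4)) ≤ rr := by
        have hrr : rr = ((2:ℝ) ^ ((3:ℝ)/4))⁻¹ := Real.rpow_neg (by norm_num) _
        rw [Real.rpow_neg (le_of_lt hxpos), hrr]
        apply inv_anti₀ (by positivity)
        exact Real.rpow_le_rpow (by norm_num) hx2 (by norm_num)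
      have hsq : (x ^ (-((3:ℝ)/4)))^2 = x ^ (-((3:ℝ)/2)) := by
        rw [← Real.rpow_natCast (x ^ (-((3:ℝ)/4))) 2, ← Real.rpow_mul (le_of_lt hxpos)]
        norm_num
      have hxe_nonneg : 0 ≤ x ^ (-((3:ℝ)/4)) := Real.rpow_nonneg (le_of_lt hxpos) _
      have key : (x ^ (-((3:ℝ)/4)))^(j+2) ≤ x ^ (-((3:ℝ)/2)) * rr ^ j := by
        rw [pow_add, ← hsq, mul_comm]
        apply mul_le_mul_of_nonneg_left _ (by positivity)
        exact pow_le_pow_left₀ hxe_nonneg hxe j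
      have hcast : x ^ (-((3:ℝ)/2)) = ((s:ℝ)+2) ^ (-((3:ℝ)/2)) := by
        rw [hxdef]; norm_num
      calc 8 * (M:ℝ) * (x ^ (-((3:ℝ)/4)))^(j+2)
          ≤ 8 * M * (x ^ (-((3:ℝ)/2)) * rr ^ j) := by
            apply mul_le_mul_of_nonneg_left key (by positivity)
        _ = 8 * M * (((s:ℝ)+2) ^ (-((3:ℝ)/2)) * rr ^ j) := by rw [hcast]
    · apply Summable.mul_left
      have base : Summable (fun n : ℕ => (n:ℝ) ^ (-((3:ℝ)/2))) :=
        Real.summable_nat_rpow.mpr (by norm_num)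
      have shifted := (summable_nat_add_iff 2).mpr base
      have hf : Summable (fun s : ℕ => ((s:ℝ)+2) ^ (-((3:ℝ)/2))) := by
        apply shifted.congr
        intro s
        push_cast
        ring_nf
      have hgeo : Summable (fun j : ℕ => rr ^ j) :=
        summable_geometric_of_lt_one rr_nonneg rr_lt_one
      exact Summable.mul_of_nonneg hf hgeo (fun s => by positivity) (fun j => by positivity)


lemma exists_good_prime (P : ℕ) (hP : 0 < P) (hodd : Odd P) (x : ℕ) :
    ∃ p : ℕ, p.Prime ∧ x < p ∧ (2*P) ∣ (p+1) ∧
      ∀ M q d, M ∣ P → IsPrimePow q → 1 ≤ d →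
        M * p ≠ ∑ i ∈ Finset.range d, q ^ i := by
  by_contra hcon
  push_neg at hcon
  -- hcon : ∀ p, p.Prime → x < p → 2*P ∣ p+1 → ∃ M q d, M ∣ P ∧ IsPrimePow q ∧ 1 ≤ d ∧ M*p = ∑ …
  haveI : NeZero (2*P) := ⟨by omega⟩
  have ha : IsUnit (-1 : ZMod (2*P)) := isUnit_one.neg
  apply ArithmeticFunction.vonMangoldt.not_summable_residueClass_prime_div ha
  set F := fun n : ℕ =>
    (if n.Prime then ArithmeticFunction.vonMangoldt.residueClass (-1 : ZMod (2*P)) n else 0)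
      / (n : ℝ) with hF
  show Summable F
  set G := fun n : ℕ => Set.indicator {m : ℕ | m ≤ x} Lw n
      + ∑ M ∈ P.divisors, ((B2 M).indicator Lw n + (B3 M).indicator Lw n) with hG
  have hGsum : Summable G := by
    apply Summable.add
    · apply summable_of_finite_support
      apply Set.Finite.subset (Set.finite_Iic x)
      exact Set.support_indicator_subset
    · apply summable_sum
      intro M hM
      have hM1 : 1 ≤ M := Nat.pos_of_mem_divisors hM
      exact (summable_B2 hM1).add (summable_B3 hM1)
  have hSnn : ∀ n, 0 ≤ ∑ M ∈ P.divisors, ((B2 M).indicator Lw n + (B3 M).indicator Lw n) :=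
    fun n => Finset.sum_nonneg fun M _ =>
      add_nonneg (Set.indicator_apply_nonneg fun _ => Lw_nonneg _)
        (Set.indicator_apply_nonneg fun _ => Lw_nonneg _)
  have hInn : ∀ n, 0 ≤ Set.indicator {m : ℕ | m ≤ x} Lw n :=
    fun n => Set.indicator_apply_nonneg fun _ => Lw_nonneg _
  apply Summable.of_nonneg_of_le (f := G) ?_ ?_ hGsum
  · intro n
    apply div_nonneg _ (Nat.cast_nonneg n)
    split
    · exact Set.indicator_apply_nonneg fun _ => ArithmeticFunction.vonMangoldt_nonneg
    · exact le_refl 0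
  · intro n
    by_cases hp : n.Prime
    · by_cases hcl : ((n : ZMod (2*P)) = -1)
      · have hnpos : (0:ℝ) < n := by exact_mod_cast hp.pos
        have hFLw : F n ≤ Lw n := by
          rw [hF]
          simp only [if_pos hp]
          have : ArithmeticFunction.vonMangoldt.residueClass (-1 : ZMod (2*P)) n
              ≤ Real.log n := by
            refine le_trans (ArithmeticFunction.vonMangoldt.residueClass_le _ _) ?_
            exact ArithmeticFunction.vonMangoldt_le_log
          exact div_le_div_of_nonneg_right this hnpos.le
        by_cases hx' : n ≤ x
        · calc F n ≤ Lw n := hFLw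
            _ = Set.indicator {m : ℕ | m ≤ x} Lw n :=
                (Set.indicator_of_mem (show n ∈ {m : ℕ | m ≤ x} from hx') Lw).symm
            _ ≤ G n := le_add_of_nonneg_right (hSnn n)
        · -- n > x : use badness hypothesis
          have hdvd : (2*P) ∣ (n+1) := by
            have : ((n+1 : ℕ) : ZMod (2*P)) = 0 := by
              push_cast
              rw [hcl]
              ring
            exact (ZMod.natCast_eq_zero_iff _ _).mp this
          obtain ⟨M, q, d, hMP, hq, hd, heq⟩ := hcon n hp (by omega) hdvd
          have hM1 : 1 ≤ M := Nat.pos_of_dvd_of_pos hMP hP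
          have hmem : n ∈ B2 M ∪ B3 M := by
            rcases (by omega : d = 1 ∨ d = 2 ∨ 3 ≤ d) with rfl | rfl | h3
            · exfalso
              simp only [Finset.range_one, Finset.sum_singleton, pow_zero] at heq
              have := hp.two_le
              nlinarith
            · left
              have hsum2 : ∑ i ∈ Finset.range 2, q ^ i = 1 + q := by
                simp [Finset.sum_range_succ]
              rw [hsum2] at heq
              -- parity
              have hModd : Odd M := by
                rcases Nat.even_or_odd M with he | ho
                · exfalso
                  have h2M : 2 ∣ M := he.two_dvd
                  have h2P : 2 ∣ P := h2M.trans hMP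
                  rw [Nat.odd_iff] at hodd
                  omega
                · exact ho
              have hnodd : Odd n := by
                have h2n : 2 ∣ n + 1 := dvd_trans (Dvd.intro P rfl) hdvd
                rw [Nat.odd_iff]
                omega
              have hMn : (M*n) % 2 = 1 := Nat.odd_iff.mp (hModd.mul hnodd)
              have h2q : 2 ∣ q := by omega
              obtain ⟨r, t, hrp, ht, hq2⟩ := hq
              have hr' : r.Prime := Nat.prime_iff.mpr hrp
              have h2r : 2 ∣ r := Nat.Prime.dvd_of_dvd_pow Nat.prime_two (hq2 ▸ h2q)
              have hr2 : 2 = r := (Nat.prime_dvd_prime_iff_eq Nat.prime_two hr').mp h2r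
              refine ⟨t - 1, ?_⟩
              have htt : t - 1 + 1 = t := by omega
              rw [htt]
              rw [← hr2] at hq2
              rw [hq2]
              exact heq
            · right
              have e1 : q - 2 + 2 = q := by have := hq.two_le; omega
              have e2 : d - 3 + 3 = d := by omega
              exact ⟨q - 2, d - 3, by rw [e1, e2]; exact heq⟩
          have hLwle : Lw n ≤ ∑ M' ∈ P.divisors, ((B2 M').indicator Lw n + (B3 M').indicator Lw n) := by
            have hMmem : M ∈ P.divisors := Nat.mem_divisors.mpr ⟨hMP, by omega⟩
            refine le_trans ?_ (Finset.single_le_sum (f := fun M' =>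
              (B2 M').indicator Lw n + (B3 M').indicator Lw n)
              (fun M' _ => add_nonneg (Set.indicator_apply_nonneg fun _ => Lw_nonneg _)
                (Set.indicator_apply_nonneg fun _ => Lw_nonneg _)) hMmem)
            show Lw n ≤ (B2 M).indicator Lw n + (B3 M).indicator Lw n
            rcases hmem with h2 | h3
            · rw [Set.indicator_of_mem h2]
              exact le_add_of_nonneg_right (Set.indicator_apply_nonneg fun _ => Lw_nonneg _)
            · rw [Set.indicator_of_mem h3]
              exact le_add_of_nonneg_left (Set.indicator_apply_nonneg fun _ => Lw_nonneg _)
          calc F n ≤ Lw n := hFLw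
            _ ≤ G n := by
                rw [hG]
                exact le_trans hLwle (le_add_of_nonneg_left (hInn n))
      · have : F n = 0 := by
          rw [hF]
          simp only [if_pos hp]
          rw [show ArithmeticFunction.vonMangoldt.residueClass (-1 : ZMod (2*P)) n = 0
            from Set.indicator_of_notMem (s := {m : ℕ | (m : ZMod (2*P)) = -1}) (a := n) hcl _]
          simp
        rw [this]
        exact add_nonneg (hInn n) (hSnn n)
    · have : F n = 0 := by
        rw [hF]
        simp [hp]
      rw [this]
      exact add_nonneg (hInn n) (hSnn n)


noncomputable def nextP (P x : ℕ) : ℕ :=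
  if h : 0 < P ∧ Odd P then (exists_good_prime P h.1 h.2 x).choose else 0

lemma nextP_spec {P : ℕ} (h1 : 0 < P) (h2 : Odd P) (x : ℕ) :
    (nextP P x).Prime ∧ x < nextP P x ∧ (2*P) ∣ (nextP P x + 1) ∧
      ∀ M q d, M ∣ P → IsPrimePow q → 1 ≤ d →
        M * nextP P x ≠ ∑ i ∈ Finset.range d, q ^ i := by
  rw [nextP, dif_pos ⟨h1, h2⟩]
  exact (exists_good_prime P h1 h2 x).choose_spec

noncomputable def seqPair : ℕ → ℕ × ℕ
  | 0 => (nextP 1 1, nextP 1 1)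
  | n+1 => (nextP (seqPair n).2 ((seqPair n).2 ^ 4),
      (seqPair n).2 * nextP (seqPair n).2 ((seqPair n).2 ^ 4))

noncomputable def pr (n : ℕ) : ℕ := (seqPair n).1
noncomputable def Qp (n : ℕ) : ℕ := (seqPair n).2

lemma pr_succ (n : ℕ) : pr (n+1) = nextP (Qp n) ((Qp n)^4) := rfl
lemma Qp_succ (n : ℕ) : Qp (n+1) = Qp n * pr (n+1) := rfl
lemma pr_zero : pr 0 = nextP 1 1 := rfl
lemma Qp_zero : Qp 0 = pr 0 := rfl

lemma odd_of_dvd_succ {p m : ℕ} (h : 2*m ∣ p + 1) : Odd p := by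
  have h2 : 2 ∣ p + 1 := dvd_trans (Dvd.intro m rfl) h
  rw [Nat.odd_iff]
  omega

lemma seq_inv (n : ℕ) : 0 < Qp n ∧ Odd (Qp n) ∧ (pr n).Prime ∧ Odd (pr n) := by
  induction n with
  | zero =>
    obtain ⟨hp, hx, hdvd, _⟩ := nextP_spec one_pos odd_one 1
    have hodd : Odd (nextP 1 1) := odd_of_dvd_succ hdvd
    exact ⟨by rw [Qp_zero, pr_zero]; exact hp.pos, by rw [Qp_zero, pr_zero]; exact hodd,
      by rw [pr_zero]; exact hp, by rw [pr_zero]; exact hodd⟩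
  | succ n ih =>
    obtain ⟨hQ, hQodd, _, _⟩ := ih
    obtain ⟨hp, hx, hdvd, _⟩ := nextP_spec hQ hQodd ((Qp n)^4)
    rw [← pr_succ] at hp hdvd
    have hodd : Odd (pr (n+1)) := odd_of_dvd_succ hdvd
    refine ⟨?_, ?_, hp, hodd⟩
    · rw [Qp_succ]; exact Nat.mul_pos hQ hp.pos
    · rw [Qp_succ]; exact hQodd.mul hodd

lemma pr_prime (n : ℕ) : (pr n).Prime := (seq_inv n).2.2.1
lemma Qp_pos (n : ℕ) : 0 < Qp n := (seq_inv n).1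

lemma step_spec (n : ℕ) : (Qp n)^4 < pr (n+1) ∧ 2*(Qp n) ∣ (pr (n+1) + 1) ∧
    ∀ M q d, M ∣ Qp n → IsPrimePow q → 1 ≤ d →
      M * pr (n+1) ≠ ∑ i ∈ Finset.range d, q ^ i := by
  obtain ⟨hQ, hQodd, _, _⟩ := seq_inv n
  obtain ⟨_, hx, hdvd, hbad⟩ := nextP_spec hQ hQodd ((Qp n)^4)
  rw [← pr_succ] at hx hdvd hbad
  exact ⟨hx, hdvd, hbad⟩

lemma zero_spec : 1 < pr 0 ∧
    ∀ M q d, M ∣ 1 → IsPrimePow q → 1 ≤ d →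
      M * pr 0 ≠ ∑ i ∈ Finset.range d, q ^ i := by
  obtain ⟨_, hx, _, hbad⟩ := nextP_spec one_pos odd_one 1
  rw [← pr_zero] at hx hbad
  exact ⟨hx, hbad⟩

lemma pr_dvd_Qp {i n : ℕ} (h : i ≤ n) : pr i ∣ Qp n := by
  induction n with
  | zero =>
    have : i = 0 := by omega
    rw [this, Qp_zero]
  | succ n ih =>
    rcases Nat.lt_or_ge i (n+1) with h' | h'
    · rw [Qp_succ]
      exact dvd_mul_of_dvd_left (ih (by omega)) _
    · have : i = n+1 := by omega
      rw [this, Qp_succ]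
      exact dvd_mul_left _ _

lemma pr_mono : StrictMono pr := by
  apply strictMono_nat_of_lt_succ
  intro n
  calc pr n ≤ Qp n := Nat.le_of_dvd (Qp_pos n) (pr_dvd_Qp le_rfl)
    _ ≤ (Qp n)^4 := Nat.le_self_pow (by norm_num) _
    _ < pr (n+1) := (step_spec n).1

lemma pr_dvd_succ_one {i j : ℕ} (h : i ≤ j) : pr i ∣ pr (j+1) + 1 :=
  dvd_trans (dvd_trans (pr_dvd_Qp h) (dvd_mul_left (Qp _) 2)) (step_spec j).2.1

lemma max_rep (T : Finset ℕ) (hT : ↑T ⊆ Set.range pr) (h : T.Nonempty) :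
    ∃ j, pr j = T.max' h ∧ ∀ t ∈ T.erase (T.max' h), ∃ i, i < j ∧ pr i = t := by
  obtain ⟨j, hj⟩ := hT (T.max'_mem h)
  refine ⟨j, hj, fun t ht => ?_⟩
  obtain ⟨i, hi⟩ := hT (Finset.mem_of_mem_erase ht)
  refine ⟨i, ?_, hi⟩
  have h1 : t ≤ T.max' h := T.le_max' t (Finset.mem_of_mem_erase ht)
  have h2 : t ≠ T.max' h := Finset.ne_of_mem_erase ht
  have : pr i < pr j := by rw [hi, hj]; omega
  exact pr_mono.lt_iff_lt.mp this

lemma erase_struct (T : Finset ℕ) (hT : ↑T ⊆ Set.range pr) (h : T.Nonempty) :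
    ∃ j, pr j = T.max' h ∧
      ((j = 0 ∧ T.erase (T.max' h) = ∅) ∨
        (∃ k, j = k + 1 ∧ (∏ t ∈ T.erase (T.max' h), t) ∣ Qp k)) := by
  obtain ⟨j, hj, hrep⟩ := max_rep T hT h
  refine ⟨j, hj, ?_⟩
  cases j with
  | zero =>
    left
    refine ⟨rfl, Finset.eq_empty_iff_forall_notMem.mpr fun t ht => ?_⟩
    obtain ⟨i, hi, _⟩ := hrep t ht
    omega
  | succ k =>
    right
    refine ⟨k, rfl, ?_⟩
    have : (∏ t ∈ T.erase (T.max' h), t) = ∏ t ∈ T.erase (T.max' h), id t := by simp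
    rw [this]
    apply Finset.prod_primes_dvd
    · intro t ht
      obtain ⟨i, _, hi⟩ := hrep t ht
      rw [← hi]
      exact (pr_prime i).prime
    · intro t ht
      obtain ⟨i, hik, hi⟩ := hrep t ht
      rw [← hi]
      exact pr_dvd_Qp (by omega)

/-- There exists an infinite set `S` of primes such that for all finite subsets
`{p₁ < p₂ < ⋯ < p_κ}` of `S`: (i) `(p₁⋯p_{κ-1})⁴ < p_κ`; (ii) `gcd(p_i, p_j - 1) = 1`
for all `i, j`; and (iii) `p₁⋯p_κ ≠ (q^d - 1)/(q - 1) = 1 + q + ⋯ + q^(d-1)` for any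
prime power `q` and any `d ≥ 1`. -/
theorem exists_special_prime_set :
    ∃ S : Set ℕ, S.Infinite ∧ (∀ p ∈ S, p.Prime) ∧
      (∀ T : Finset ℕ, ↑T ⊆ S → ∀ h : T.Nonempty,
        (∏ p ∈ T.erase (T.max' h), p) ^ 4 < T.max' h) ∧
      (∀ p ∈ S, ∀ q ∈ S, Nat.gcd p (q - 1) = 1) ∧
      (∀ T : Finset ℕ, ↑T ⊆ S → T.Nonempty →
        ¬ ∃ q d : ℕ, IsPrimePow q ∧ 1 ≤ d ∧
          (∏ p ∈ T, p) = ∑ i ∈ Finset.range d, q ^ i) := by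
  refine ⟨Set.range pr, ?_, ?_, ?_, ?_, ?_⟩
  · exact Set.infinite_range_of_injective pr_mono.injective
  · rintro p ⟨i, rfl⟩
    exact pr_prime i
  · intro T hT h
    obtain ⟨j, hj, hcase⟩ := erase_struct T hT h
    rcases hcase with ⟨hj0, hempty⟩ | ⟨k, hjk, hdvd⟩
    · rw [hempty]
      simp only [Finset.prod_empty, one_pow]
      rw [← hj, hj0]
      exact zero_spec.1
    · have h1 : (∏ t ∈ T.erase (T.max' h), t) ≤ Qp k := Nat.le_of_dvd (Qp_pos k) hdvd
      calc (∏ t ∈ T.erase (T.max' h), t)^4 ≤ (Qp k)^4 := Nat.pow_le_pow_left h1 4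
        _ < pr (k+1) := (step_spec k).1
        _ = T.max' h := by rw [← hj, hjk]
  · rintro p ⟨i, rfl⟩ q ⟨j, rfl⟩
    have hp := pr_prime i
    have hqp := pr_prime j
    apply Nat.Coprime.gcd_eq_one
    rw [hp.coprime_iff_not_dvd]
    intro hdvd
    rcases Nat.lt_trichotomy i j with hij | hij | hij
    · -- i < j : pr i divides pr j + 1 and pr j - 1, so divides 2
      obtain ⟨k, hk⟩ : ∃ k, j = k + 1 := ⟨j - 1, by omega⟩
      have h1 : pr i ∣ pr j + 1 := by rw [hk]; exact pr_dvd_succ_one (by omega)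
      have h2 : pr i ∣ (pr j + 1) - (pr j - 1) := Nat.dvd_sub h1 hdvd
      have h3 : (pr j + 1) - (pr j - 1) = 2 := by have := hqp.two_le; omega
      rw [h3] at h2
      have : pr i = 2 := (Nat.prime_dvd_prime_iff_eq hp Nat.prime_two).mp h2
      have hodd := (seq_inv i).2.2.2
      rw [this, Nat.odd_iff] at hodd
      omega
    · -- i = j : pr i divides pr i - 1 < pr i
      subst hij
      have h2 := hp.two_le
      have := Nat.le_of_dvd (by omega) hdvd
      omega
    · -- j < i : pr j - 1 < pr i
      have hlt : pr j < pr i := pr_mono hij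
      have h2 := hqp.two_le
      have := Nat.le_of_dvd (by omega) hdvd
      omega
  · rintro T hT hne ⟨q, d, hq, hd, heq⟩
    obtain ⟨j, hj, hcase⟩ := erase_struct T hT hne
    have hmax : T.max' hne ∈ T := T.max'_mem hne
    have hprod : (∏ p ∈ T, p) = T.max' hne * ∏ p ∈ T.erase (T.max' hne), p :=
      (Finset.mul_prod_erase T _ hmax).symm
    rcases hcase with ⟨hj0, hempty⟩ | ⟨k, hjk, hdvd⟩
    · rw [hprod, hempty] at heq
      simp only [Finset.prod_empty, mul_one] at heq
      refine zero_spec.2 1 q d dvd_rfl hq hd ?_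
      rw [hj0] at hj
      rw [one_mul, hj]
      exact heq
    · refine (step_spec k).2.2 (∏ p ∈ T.erase (T.max' hne), p) q d hdvd hq hd ?_
      rw [hjk] at hj
      rw [mul_comm, hj, ← hprod]
      exact heq
end

section
/- If n is a squarefree positive integer with gcd(n, φ(n)) = 1, then every group of order n is cyclic. -/
/-!
A group of squarefree order has cyclic Sylow subgroups (it is a Z-group), so both its
commutator subgroup `G'` and its abelianization `G ⧸ G'` are cyclic. Conjugation maps `G` into
`Aut G'`, whose order `φ |G'|` divides `φ n` and is therefore coprime to `n`; so the action is
trivial and `G'` is central. A group that is cyclic modulo a central subgroup is abelian, and an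
abelian Z-group is cyclic.
-/

theorem MonoidHom.eq_one_of_coprime_card {G H : Type*} [Group G] [Group H] (f : G →* H)
    (h : (Nat.card G).Coprime (Nat.card H)) : f = 1 := by
  have hrange : Nat.card f.range = 1 :=
    Nat.eq_one_of_dvd_coprimes h (Subgroup.card_range_dvd f) f.range.card_subgroup_dvd_card
  rw [← MonoidHom.range_eq_bot_iff, ← Subgroup.card_eq_one, hrange]

theorem Subgroup.le_center_of_coprime_card_mulAut {G : Type*} [Group G] (N : Subgroup G)
    [N.Normal] (h : (Nat.card G).Coprime (Nat.card (MulAut N))) : N ≤ center G := by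
  intro k hk
  rw [mem_center_iff]
  intro g
  have hconj : (MulAut.conjNormal g ⟨k, hk⟩ : G) = k := by
    rw [MulAut.conjNormal.eq_one_of_coprime_card h]
    rfl
  rwa [MulAut.conjNormal_apply, mul_inv_eq_iff_eq_mul] at hconj

/-- If `n` is squarefree and `gcd(n, φ(n)) = 1`, then every group of order `n` is cyclic. -/
theorem cyclic_of_squarefree_coprime_totient (n : ℕ) (hsf : Squarefree n)
    (hgcd : Nat.gcd n (Nat.totient n) = 1)
    (G : Type) [Group G] [Fintype G] (hG : Fintype.card G = n) :
    IsCyclic G := by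
  rw [← Nat.card_eq_fintype_card] at hG
  subst hG
  have : IsZGroup G := IsZGroup.of_squarefree hsf
  have : IsCyclic (commutator G) := IsZGroup.isCyclic_commutator G
  have hcentral : commutator G ≤ Subgroup.center G := by
    refine (commutator G).le_center_of_coprime_card_mulAut ?_
    rw [IsCyclic.card_mulAut]
    exact Nat.Coprime.coprime_dvd_right
      (Nat.totient_dvd_of_dvd (commutator G).card_subgroup_dvd_card) hgcd
  let : CommGroup G :=
    commGroupOfCyclicCenterQuotient Abelianization.of (Abelianization.ker_of G ▸ hcentral)
  exact IsCyclic.of_exponent_eq_card (IsZGroup.exponent_eq_card G)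
end
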